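/- For every junction-tree edge j–k and every assignment with P(X_{S_{jk}}, E) > 0, the conditional distribution of the cluster given its separator and the evidence is P(X_{C_j} | X_{S_{jk}}, E) = Φ_j(X_{C_j}) · ∏_{i ∈ n(j), i ≠ k} M_{i→j}(X_{S_{ij}}) / M_{j→k}(X_{S_{jk}}). -/

import Mathlib

open Finset
open scoped Classical

/-- A junction tree for a Bayesian network with variable index set `U`:
a tree of clusters `C i ⊆ U` (indexed by `I`) satisfying the covering property
(via a cluster assignment `cl` with `fa(u) = {u} ∪ pa(u) ⊆ C (cl u)`) and the
running-intersection property. -/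
structure JT (U : Type) [Fintype U] [DecidableEq U] (I : Type) [Fintype I] where
  /-- the tree on clusters -/
  G : SimpleGraph I
  tree : G.IsTree
  /-- the clusters -/
  C : I → Finset U
  /-- the parent sets of the DAG of the Bayesian network -/
  pa : U → Finset U
  /-- the cluster assignment -/
  cl : U → I
  /-- covering: the family fa(u) of each variable is contained in its assigned cluster -/
  cover : ∀ u : U, insert u (pa u) ⊆ C (cl u)
  /-- running intersection -/
  runInter : ∀ i j : I, ∀ pth : G.Path i j, ∀ k ∈ pth.1.support, C i ∩ C j ⊆ C k

/-- The upstream set U_{i→j} : variables whose assigned cluster lies on the `i` side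
of the edge i–j, i.e. `i` is on the path from `cl u` to `j`. -/
noncomputable def upSet {U I : Type} [Fintype U] [DecidableEq U] [Fintype I]
    (J : JT U I) (i j : I) : Finset U :=
  Finset.univ.filter fun u => ∃ pth : J.G.Path (J.cl u) j, i ∈ pth.1.support

/-- The separator S_{ij} = C i ∩ C j of an edge. -/
def sep {U I : Type} [Fintype U] [DecidableEq U] [Fintype I]
    (J : JT U I) (i j : I) : Finset U := J.C i ∩ J.C j

/-- Marginal of a nonnegative function `f` on assignments: sum of `f` over all
assignments agreeing with `x` on the coordinates in `A`. -/
noncomputable def margOn {U : Type} [Fintype U] [DecidableEq U] {D : U → Type}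
    [∀ u, Fintype (D u)] [∀ u, DecidableEq (D u)]
    (f : (∀ u, D u) → ℝ) (A : Finset U) (x : ∀ u, D u) : ℝ :=
  ∑ z : ∀ u, D u, if ∀ v ∈ A, z v = x v then f z else 0

/-- The message M_{i→j}(X_{S_ij}) = ∑_{X_{V_{i→j}}} ∏_{u ∈ U_{i→j}} K_u, realized as a sum
over full assignments agreeing with `x` outside V_{i→j} = U_{i→j} \ S_{ij}. -/
noncomputable def msg {U I : Type} [Fintype U] [DecidableEq U] [Fintype I]
    (J : JT U I) {D : U → Type} [∀ u, Fintype (D u)] [∀ u, DecidableEq (D u)]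
    (K : (u : U) → (∀ v, D v) → ℝ) (i j : I) (x : ∀ u, D u) : ℝ :=
  ∑ z : ∀ u, D u,
    if ∀ v, v ∉ upSet J i j \ sep J i j → z v = x v
    then ∏ u ∈ upSet J i j, K u z else 0

/-- The neighbor set n(j) of a cluster in the junction tree. -/
noncomputable def nbr {U I : Type} [Fintype U] [DecidableEq U] [Fintype I]
    (J : JT U I) (j : I) : Finset I :=
  Finset.univ.filter fun i => J.G.Adj i j

/-- The cluster potential Φ_j = ∏_{u : cl u = j} K_u. -/
noncomputable def pot {U I : Type} [Fintype U] [DecidableEq U] [Fintype I]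
    (J : JT U I) {D : U → Type} [∀ u, Fintype (D u)] [∀ u, DecidableEq (D u)]
    (K : (u : U) → (∀ v, D v) → ℝ) (j : I) (x : ∀ u, D u) : ℝ :=
  ∏ u ∈ Finset.univ.filter (fun u => J.cl u = j), K u x

/-!
Removing the edge `j – k` splits the tree into the two sides `upSet J j k` and `upSet J k j`;
removing the cluster `j` splits it into the sides `upSet J i j`, `i ∈ nbr J j`. By running
intersection, the factors `K u` of one side see the rest only through the separator, so the
sum over the variables private to each side factorises:
`P(X_{S_jk}, E) = M_{j→k} M_{k→j}` and `P(X_{C_j}, E) = Φ_j ∏_{i ∈ n(j)} M_{i→j}`.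
Dividing, `M_{k→j}` cancels; it is nonzero because the separator marginal is.
-/

namespace SimpleGraph

variable {V : Type*} {G : SimpleGraph V}

theorem IsTree.exists_path_mem_support_or (hG : G.IsTree) {j k : V} (hjk : G.Adj j k) (v : V) :
    (∃ p : G.Path v k, j ∈ p.1.support) ∨ ∃ q : G.Path v j, k ∈ q.1.support := by
  obtain ⟨p, hp, -⟩ := hG.existsUnique_path v k
  obtain ⟨q, hq, -⟩ := hG.existsUnique_path v j
  by_cases hk : k ∈ q.support
  · exact .inr ⟨⟨q, hq⟩, hk⟩
  · exact .inl ⟨⟨p, hp⟩,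
      hG.isAcyclic.mem_support_of_ne_mem_support_of_adj_of_isPath hp hq hjk.symm hk⟩

theorem IsTree.exists_path_mem_support_mem_support (hG : G.IsTree) {j k a b : V}
    (hjk : G.Adj j k) (ha : ∃ p : G.Path a j, k ∈ p.1.support)
    (hb : ∃ q : G.Path b k, j ∈ q.1.support) :
    ∃ r : G.Path a b, j ∈ r.1.support ∧ k ∈ r.1.support := by
  obtain ⟨p, hk⟩ := ha
  obtain ⟨q, hj⟩ := hb
  set p' := p.1.takeUntil k hk
  set q' := q.1.takeUntil j hj
  have hp' : p'.IsPath := p.2.takeUntil hk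
  have hq' : q'.IsPath := q.2.takeUntil hj
  have hjp : j ∉ p'.support := Walk.endpoint_notMem_support_takeUntil p.2 hk hjk.ne
  have hkq : k ∉ q'.support := Walk.endpoint_notMem_support_takeUntil q.2 hj hjk.ne.symm
  -- a common vertex `c` would have a path to `k` avoiding `j` and a path to `j` avoiding `k`
  have hdisj : ∀ c ∈ p'.support, c ∉ q'.support := by
    intro c hcp hcq
    rcases hG.exists_path_mem_support_or hjk c with ⟨r, hr⟩ | ⟨r, hr⟩
    · obtain rfl : r = ⟨_, hp'.dropUntil hcp⟩ := (hG.isAcyclic.subsingleton_path _ _).elim _ _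
      exact hjp (p'.support_dropUntil_subset_support hcp hr)
    · obtain rfl : r = ⟨_, hq'.dropUntil hcq⟩ := (hG.isAcyclic.subsingleton_path _ _).elim _ _
      exact hkq (q'.support_dropUntil_subset_support hcq hr)
  refine ⟨⟨p'.append (.cons hjk.symm q'.reverse), ?_⟩, ?_, ?_⟩
  · rw [Walk.isPath_def, Walk.support_append, Walk.support_cons, List.tail_cons,
      Walk.support_reverse, List.nodup_append]
    exact ⟨hp'.support_nodup, List.nodup_reverse.2 hq'.support_nodup,
      fun c hcp c' hcq h => hdisj c hcp (h ▸ List.mem_reverse.1 hcq)⟩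
  · simp [Walk.mem_support_append_iff]
  · simp [Walk.mem_support_append_iff]

theorem IsAcyclic.eq_of_adj_of_mem_support (hG : G.IsAcyclic) {i i' j v : V} {p : G.Walk v j}
    (hp : p.IsPath) (hij : G.Adj i j) (hi'j : G.Adj i' j) (hi : i ∈ p.support)
    (hi' : i' ∈ p.support) : i = i' :=
  (hG.eq_penultimate_of_adj_end hp hij.symm hi).trans
    (hG.eq_penultimate_of_adj_end hp hi'j.symm hi').symm

theorem Walk.exists_adj_mem_support {v j : V} (hvj : v ≠ j) (p : G.Walk v j) :
    ∃ i, G.Adj i j ∧ i ∈ p.support :=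
  ⟨p.penultimate, p.adj_penultimate (Walk.not_nil_of_ne hvj), p.getVert_mem_support _⟩

end SimpleGraph

theorem dependsOn_prod {ι κ β : Type*} {α : ι → Type*} [CommMonoid β] {s : Set ι}
    (T : Finset κ) {F : κ → (∀ i, α i) → β} (hF : ∀ k ∈ T, DependsOn (F k) s) :
    DependsOn (fun z => ∏ k ∈ T, F k z) s :=
  fun _ _ h => prod_congr rfl fun k hk => hF k hk h

section Fiber

variable {U : Type*} [Fintype U] [DecidableEq U] {D : U → Type*} [∀ u, Fintype (D u)]
  [∀ u, DecidableEq (D u)] {R : Type*} [CommSemiring R]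

def fiber (V : Finset U) (x : ∀ u, D u) : Finset (∀ u, D u) :=
  univ.filter fun z => ∀ v ∉ V, z v = x v

@[simp]
theorem mem_fiber {V : Finset U} {x z : ∀ u, D u} : z ∈ fiber V x ↔ ∀ v ∉ V, z v = x v := by
  simp [fiber]

theorem fiber_empty (x : ∀ u, D u) : fiber ∅ x = {x} := by
  ext z
  simp [funext_iff]

theorem sum_fiber_mul_of_dependsOn {V : Finset U} {f g : (∀ u, D u) → R}
    (hf : DependsOn f (↑V)ᶜ) (x : ∀ u, D u) :
    ∑ z ∈ fiber V x, f z * g z = f x * ∑ z ∈ fiber V x, g z := by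
  rw [mul_sum]
  refine sum_congr rfl fun z hz => ?_
  rw [hf fun v hv => mem_fiber.1 hz v hv]

theorem sum_fiber_union_mul {V W : Finset U} (hVW : Disjoint V W) {f g : (∀ u, D u) → R}
    (hf : DependsOn f (↑W)ᶜ) (hg : DependsOn g (↑V)ᶜ) (x : ∀ u, D u) :
    ∑ z ∈ fiber (V ∪ W) x, f z * g z
      = (∑ z ∈ fiber V x, f z) * ∑ z ∈ fiber W x, g z := by
  rw [sum_mul_sum, ← sum_product']
  have hW : ∀ v ∈ V, v ∉ W := fun _ hv => disjoint_left.1 hVW hv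
  refine sum_nbij' (fun z => (V.piecewise z x, V.piecewise x z))
    (fun p => V.piecewise p.1 p.2) ?_ ?_ ?_ ?_ ?_
  · intro z hz
    simp only [mem_product, mem_fiber, mem_union, not_or] at hz ⊢
    exact ⟨fun v hv => by simp [hv], fun v hv => by by_cases hvV : v ∈ V <;> simp [hvV, hv, hz v]⟩
  · intro p hp
    simp only [mem_product, mem_fiber, mem_union, not_or] at hp ⊢
    exact fun v hv => by simp [hv.1, hp.2 v hv.2]
  · intro z _
    ext v
    by_cases hvV : v ∈ V <;> simp [hvV]
  · intro p hp
    simp only [mem_product, mem_fiber] at hp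
    ext v <;> by_cases hvV : v ∈ V <;> simp [hvV, hp.1 v, hp.2 v, hW v]
  · intro z hz
    simp only [mem_fiber, mem_union, not_or] at hz
    congr 1
    · refine hf fun v hv => ?_
      by_cases hvV : v ∈ V
      · simp [hvV]
      · simp [hvV, hz v ⟨hvV, hv⟩]
    · exact hg fun v hv => (piecewise_eq_of_notMem _ _ _ hv).symm

theorem sum_fiber_biUnion_prod {ι : Type*} (T : Finset ι) {V : ι → Finset U}
    (hV : (T : Set ι).PairwiseDisjoint V) {F : ι → (∀ u, D u) → R}
    (hF : ∀ i ∈ T, DependsOn (F i) ((↑(T.biUnion V))ᶜ ∪ ↑(V i))) (x : ∀ u, D u) :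
    ∑ z ∈ fiber (T.biUnion V) x, ∏ i ∈ T, F i z = ∏ i ∈ T, ∑ z ∈ fiber (V i) x, F i z := by
  induction T using Finset.induction_on with
  | empty => simp [fiber_empty]
  | @insert a T haT ih =>
    have hVa : ∀ i ∈ T, Disjoint (V a) (V i) := fun i hi =>
      hV (mem_insert_self a T) (mem_insert_of_mem hi) (ne_of_mem_of_not_mem hi haT).symm
    have hVaT : Disjoint (V a) (T.biUnion V) := (disjoint_biUnion_right _ _ _).2 hVa
    simp only [biUnion_insert, prod_insert haT] at hF ⊢
    rw [sum_fiber_union_mul hVaT, ih (hV.subset (by simp))]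
    · intro i hi
      refine (hF i (mem_insert_of_mem hi)).mono (Set.union_subset_union_left _ ?_)
      exact Set.compl_subset_compl.2 (by simp)
    · refine (hF a (mem_insert_self a T)).mono (Set.union_subset ?_ ?_)
      · exact Set.compl_subset_compl.2 (by simp)
      · exact Set.subset_compl_iff_disjoint_right.2 (disjoint_coe.2 hVaT)
    · refine dependsOn_prod T fun i hi => (hF i (mem_insert_of_mem hi)).mono ?_
      refine Set.union_subset (Set.compl_subset_compl.2 (by simp))
        (Set.subset_compl_iff_disjoint_left.2 (disjoint_coe.2 (hVa i hi)))

end Fiber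

section JunctionTree

variable {U I : Type} [Fintype U] [DecidableEq U] [Fintype I] (J : JT U I)

theorem sep_comm (i j : I) : sep J i j = sep J j i :=
  inter_comm _ _

theorem mem_upSet {u : U} {i j : I} :
    u ∈ upSet J i j ↔ ∃ p : J.G.Path (J.cl u) j, i ∈ p.1.support := by
  simp [upSet]

theorem mem_nbr {i j : I} : i ∈ nbr J j ↔ J.G.Adj i j := by
  simp [nbr]

theorem upSet_union_upSet {j k : I} (hjk : J.G.Adj j k) : upSet J j k ∪ upSet J k j = univ :=
  eq_univ_of_forall fun u => by
    simpa only [mem_union, mem_upSet] using J.tree.exists_path_mem_support_or hjk (J.cl u)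

theorem disjoint_upSet {j k : I} (hjk : J.G.Adj j k) : Disjoint (upSet J j k) (upSet J k j) := by
  refine disjoint_left.2 fun u hjk' hkj' => ?_
  obtain ⟨p, hp⟩ := (mem_upSet J).1 hjk'
  obtain ⟨q, hq⟩ := (mem_upSet J).1 hkj'
  exact J.tree.isAcyclic.ne_mem_support_of_support_of_adj_of_isPath p.2 q.2 hjk.symm hp hq

theorem disjoint_upSet_union_sep {j k : I} (hjk : J.G.Adj j k) :
    Disjoint (upSet J j k ∪ sep J j k) (upSet J k j \ sep J k j) :=
  disjoint_union_left.2
    ⟨(disjoint_upSet J hjk).mono_right sdiff_subset, sep_comm J j k ▸ disjoint_sdiff⟩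

theorem pairwiseDisjoint_upSet (j : I) : (nbr J j : Set I).PairwiseDisjoint (upSet J · j) := by
  intro i hi i' hi' hne
  refine disjoint_left.2 fun u hu hu' => hne ?_
  obtain ⟨p, hp⟩ := (mem_upSet J).1 hu
  obtain ⟨q, hq⟩ := (mem_upSet J).1 hu'
  obtain rfl : p = q := (J.tree.isAcyclic.subsingleton_path _ _).elim _ _
  exact J.tree.isAcyclic.eq_of_adj_of_mem_support p.2 ((mem_nbr J).1 hi) ((mem_nbr J).1 hi') hp hq

theorem mem_biUnion_upSet {j : I} {u : U} :
    u ∈ (nbr J j).biUnion (upSet J · j) ↔ J.cl u ≠ j := by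
  simp only [mem_biUnion, mem_nbr, mem_upSet]
  constructor
  · rintro ⟨i, hij, p, hi⟩ rfl
    rw [SimpleGraph.Walk.nil_iff_support_eq.1 (SimpleGraph.Walk.isPath_iff_nil.1 p.2),
      List.mem_singleton] at hi
    exact hij.ne hi
  · intro hu
    obtain ⟨p, hp, -⟩ := J.tree.existsUnique_path (J.cl u) j
    obtain ⟨i, hij, hi⟩ := p.exists_adj_mem_support hu
    exact ⟨i, hij, ⟨p, hp⟩, hi⟩

/-- A parent outside `upSet J j k` has its cluster on the other side of the edge, so running
intersection along the path between the two clusters puts it in both `C j` and `C k`. -/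
theorem insert_pa_subset_upSet_union_sep {j k : I} (hjk : J.G.Adj j k) {u : U}
    (hu : u ∈ upSet J j k) : insert u (J.pa u) ⊆ upSet J j k ∪ sep J j k := by
  intro v hv
  rw [mem_union, or_iff_not_imp_left]
  intro hvu
  have hvk : v ∈ upSet J k j := by
    simpa [hvu] using (upSet_union_upSet J hjk).ge (mem_univ v)
  obtain ⟨r, hj, hk⟩ :=
    J.tree.exists_path_mem_support_mem_support hjk ((mem_upSet J).1 hvk) ((mem_upSet J).1 hu)
  have hvC : v ∈ J.C (J.cl v) ∩ J.C (J.cl u) :=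
    mem_inter.2 ⟨J.cover v (mem_insert_self v _), J.cover u hv⟩
  exact mem_inter.2 ⟨J.runInter _ _ r j hj hvC, J.runInter _ _ r k hk hvC⟩

theorem upSet_sdiff_sep (i j : I) : upSet J i j \ sep J i j = upSet J i j \ J.C j := by
  ext v
  simp only [mem_sdiff, sep, mem_inter, and_congr_right_iff, not_and]
  intro hv
  obtain ⟨p, hp⟩ := (mem_upSet J).1 hv
  have hvC : v ∈ J.C j → v ∈ J.C (J.cl v) ∩ J.C j :=
    fun hC => mem_inter.2 ⟨J.cover v (mem_insert_self v _), hC⟩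
  exact ⟨fun h hC => h (J.runInter _ _ p i hp (hvC hC)) hC, fun h _ => h⟩

end JunctionTree

section Messages

variable {U I : Type} [Fintype U] [DecidableEq U] [Fintype I] (J : JT U I)
  {D : U → Type} {K : (u : U) → (∀ v, D v) → ℝ}

theorem dependsOn_prod_upSet (hK : ∀ u, DependsOn (K u) ↑(insert u (J.pa u))) {j k : I}
    (hjk : J.G.Adj j k) :
    DependsOn (fun z => ∏ u ∈ upSet J j k, K u z) ↑(upSet J j k ∪ sep J j k) :=
  dependsOn_prod _ fun u hu =>
    (hK u).mono (coe_subset.2 (insert_pa_subset_upSet_union_sep J hjk hu))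

variable [∀ u, Fintype (D u)] [∀ u, DecidableEq (D u)]

theorem margOn_eq_sum_fiber (f : (∀ u, D u) → ℝ) (A : Finset U) (x : ∀ u, D u) :
    margOn f A x = ∑ z ∈ fiber Aᶜ x, f z := by
  simp [margOn, fiber, sum_filter]

theorem msg_eq_sum_fiber (i j : I) (x : ∀ u, D u) :
    msg J K i j x = ∑ z ∈ fiber (upSet J i j \ sep J i j) x, ∏ u ∈ upSet J i j, K u z := by
  rw [msg, fiber, sum_filter]

theorem dependsOn_pot (hK : ∀ u, DependsOn (K u) ↑(insert u (J.pa u))) (j : I) :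
    DependsOn (pot J K j) ↑(J.C j) :=
  dependsOn_prod _ fun u hu => (hK u).mono (coe_subset.2 ((mem_filter.1 hu).2 ▸ J.cover u))

theorem prod_eq_pot_mul_prod_nbr (j : I) (z : ∀ u, D u) :
    ∏ u, K u z = pot J K j z * ∏ i ∈ nbr J j, ∏ u ∈ upSet J i j, K u z := by
  rw [← prod_biUnion (pairwiseDisjoint_upSet J j),
    ← prod_filter_mul_prod_filter_not univ (fun u => J.cl u = j), pot]
  congr 2
  ext u
  rw [mem_filter, mem_biUnion_upSet]
  simp

theorem margOn_cluster (hK : ∀ u, DependsOn (K u) ↑(insert u (J.pa u))) (j : I)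
    (x : ∀ u, D u) :
    margOn (fun z => ∏ u, K u z) (J.C j) x = pot J K j x * ∏ i ∈ nbr J j, msg J K i j x := by
  have hcompl : (J.C j)ᶜ = (nbr J j).biUnion fun i => upSet J i j \ J.C j := by
    ext v
    simp only [mem_compl, mem_biUnion, mem_sdiff]
    refine ⟨fun hv => ?_, fun ⟨_, _, _, hv⟩ => hv⟩
    have hcl : J.cl v ≠ j := fun h => hv (h ▸ J.cover v (mem_insert_self v _))
    obtain ⟨i, hi, hvi⟩ := mem_biUnion.1 ((mem_biUnion_upSet J).2 hcl)
    exact ⟨i, hi, hvi, hv⟩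
  rw [margOn_eq_sum_fiber]
  simp_rw [prod_eq_pot_mul_prod_nbr J j]
  rw [sum_fiber_mul_of_dependsOn (by simpa using dependsOn_pot J hK j), hcompl,
    sum_fiber_biUnion_prod]
  · congr 1
    refine prod_congr rfl fun i _ => ?_
    rw [msg_eq_sum_fiber, upSet_sdiff_sep]
  · exact (pairwiseDisjoint_upSet J j).mono fun i => sdiff_subset
  · intro i hi
    rw [← hcompl, coe_compl, compl_compl]
    refine (dependsOn_prod_upSet J hK ((mem_nbr J).1 hi)).mono fun v hv => ?_
    simp only [coe_union, coe_sdiff, Set.mem_union, Set.mem_sdiff, mem_coe, sep, mem_inter]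
      at hv ⊢
    tauto

theorem margOn_sep (hK : ∀ u, DependsOn (K u) ↑(insert u (J.pa u))) {j k : I}
    (hjk : J.G.Adj j k) (x : ∀ u, D u) :
    margOn (fun z => ∏ u, K u z) (sep J j k) x = msg J K j k x * msg J K k j x := by
  have hcompl : (sep J j k)ᶜ = (upSet J j k \ sep J j k) ∪ (upSet J k j \ sep J k j) := by
    rw [sep_comm J k j, ← union_sdiff_distrib, upSet_union_upSet J hjk, compl_eq_univ_sdiff]
  have hsplit : ∀ z, ∏ u, K u z = (∏ u ∈ upSet J j k, K u z) * ∏ u ∈ upSet J k j, K u z :=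
    fun z => by rw [← prod_union (disjoint_upSet J hjk), upSet_union_upSet J hjk]
  rw [margOn_eq_sum_fiber, hcompl]
  simp_rw [hsplit]
  rw [sum_fiber_union_mul ((disjoint_upSet J hjk).mono sdiff_subset sdiff_subset),
    msg_eq_sum_fiber, msg_eq_sum_fiber]
  · exact (dependsOn_prod_upSet J hK hjk).mono
      (Set.subset_compl_iff_disjoint_right.2 (disjoint_coe.2 (disjoint_upSet_union_sep J hjk)))
  · exact (dependsOn_prod_upSet J hK hjk.symm).mono
      (Set.subset_compl_iff_disjoint_right.2
        (disjoint_coe.2 (disjoint_upSet_union_sep J hjk.symm)))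

end Messages

theorem jt_cluster_conditional_general {U I : Type} [Fintype U] [DecidableEq U] [Fintype I]
    (J : JT U I) {D : U → Type} [∀ u, Fintype (D u)] [∀ u, DecidableEq (D u)]
    (cpd : (u : U) → (∀ v, D v) → ℝ) (ev : (u : U) → Finset (D u))
    (K : (u : U) → (∀ v, D v) → ℝ)
    (hK : ∀ u x, K u x = (if x u ∈ ev u then (1 : ℝ) else 0) * cpd u x)
    (hloc : ∀ u x x', (∀ v ∈ insert u (J.pa u), x v = x' v) → cpd u x = cpd u x')
    (j k : I) (hjk : J.G.Adj j k) (x : ∀ u, D u)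
    (hpos : 0 < margOn (fun z => ∏ u : U, K u z) (sep J j k) x) :
    margOn (fun z => ∏ u : U, K u z) (J.C j) x /
        margOn (fun z => ∏ u : U, K u z) (sep J j k) x =
      pot J K j x * (∏ i ∈ (nbr J j).erase k, msg J K i j x) / msg J K j k x := by
  have hKfa : ∀ u, DependsOn (K u) ↑(insert u (J.pa u)) := fun u z z' h => by
    rw [hK, hK, h u (mem_insert_self u _), hloc u z z' h]
  rw [margOn_sep J hKfa hjk] at hpos ⊢
  obtain ⟨hjk_ne, hkj_ne⟩ := mul_ne_zero_iff.1 hpos.ne'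
  rw [margOn_cluster J hKfa, ← mul_prod_erase _ _ ((mem_nbr J).2 hjk.symm)]
  field_simp

/-- Conditional distribution of a cluster given its separator and the evidence:
P(X_{C_j} | X_{S_jk}, E) = Φ_j(X_{C_j}) ∏_{i ∈ n(j), i ≠ k} M_{i→j}(X_{S_ij}) / M_{j→k}(X_{S_jk}). -/
theorem jt_cluster_conditional {U I : Type} [Fintype U] [DecidableEq U] [Fintype I]
    (J : JT U I) {D : U → Type} [∀ u, Fintype (D u)] [∀ u, DecidableEq (D u)]
    (cpd : (u : U) → (∀ v, D v) → ℝ) (ev : (u : U) → Finset (D u))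
    (K : (u : U) → (∀ v, D v) → ℝ)
    (hK : ∀ u x, K u x = (if x u ∈ ev u then (1 : ℝ) else 0) * cpd u x)
    (hloc : ∀ u x x', (∀ v ∈ insert u (J.pa u), x v = x' v) → cpd u x = cpd u x')
    (hnn : ∀ u x, 0 ≤ cpd u x)
    (j k : I) (hjk : J.G.Adj j k) (x : ∀ u, D u)
    (hpos : 0 < margOn (fun z => ∏ u : U, K u z) (sep J j k) x) :
    margOn (fun z => ∏ u : U, K u z) (J.C j) x /
        margOn (fun z => ∏ u : U, K u z) (sep J j k) x =
      pot J K j x * (∏ i ∈ (nbr J j).erase k, msg J K i j x) / msg J K j k x :=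
  jt_cluster_conditional_general J cpd ev K hK hloc j k hjk x hpos
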